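/- arXiv:1412.3512 — 5 statements merged into one kernel-verified Lean document; each statement's English description precedes it below -/
import Mathlib

section
/- A nonempty permutation π of {1,…,n} avoids the classical pattern 132 if and only if π can be written uniquely as α ⊖ (β ⊕ 1) for some (possibly empty) 132-avoiding permutations α and β. -/
open Equiv Finset

/-- π avoids the classical pattern 132. -/
def avoids132 {n : ℕ} (π : Equiv.Perm (Fin n)) : Prop :=
  ¬ ∃ i j k : Fin n, i < j ∧ j < k ∧ π i < π k ∧ π k < π j

/-- π avoids the classical pattern 231. -/
def avoids231 {n : ℕ} (π : Equiv.Perm (Fin n)) : Prop :=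
  ¬ ∃ i j k : Fin n, i < j ∧ j < k ∧ π k < π i ∧ π i < π j

/-- π avoids the classical pattern 312. -/
def avoids312 {n : ℕ} (π : Equiv.Perm (Fin n)) : Prop :=
  ¬ ∃ i j k : Fin n, i < j ∧ j < k ∧ π j < π k ∧ π k < π i

/-- Direct sum α ⊕ β of permutations. -/
def dsum {a b : ℕ} (α : Equiv.Perm (Fin a)) (β : Equiv.Perm (Fin b)) :
    Equiv.Perm (Fin (a + b)) :=
  finSumFinEquiv.symm.trans ((Equiv.sumCongr α β).trans finSumFinEquiv)

/-- Skew sum α ⊖ β of permutations. -/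
def ssum {a b : ℕ} (α : Equiv.Perm (Fin a)) (β : Equiv.Perm (Fin b)) :
    Equiv.Perm (Fin (a + b)) :=
  finSumFinEquiv.symm.trans ((Equiv.sumCongr α β).trans
    ((Equiv.sumComm (Fin a) (Fin b)).trans
      (finSumFinEquiv.trans (finCongr (Nat.add_comm b a)))))

/-- Transport a permutation of Fin m along an equality m = n. -/
def castPerm {m n : ℕ} (h : m = n) (π : Equiv.Perm (Fin m)) : Equiv.Perm (Fin n) :=
  Equiv.permCongr (finCongr h) π

/-- Number of descents. -/
def des {n : ℕ} (π : Equiv.Perm (Fin n)) : ℕ :=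
  (Finset.univ.filter (fun p : Fin n × Fin n =>
    (p.1 : ℕ) + 1 = (p.2 : ℕ) ∧ π p.2 < π p.1)).card

/-- Number of occurrences of the vincular pattern 2-\underline{31}. -/
def occ2_31 {n : ℕ} (π : Equiv.Perm (Fin n)) : ℕ :=
  (Finset.univ.filter (fun p : Fin n × Fin n × Fin n =>
    p.1 < p.2.1 ∧ (p.2.1 : ℕ) + 1 = (p.2.2 : ℕ) ∧
      π p.2.2 < π p.1 ∧ π p.1 < π p.2.1)).card

/-- Number of occurrences of the vincular pattern 2-\underline{13}. -/
def occ2_13 {n : ℕ} (π : Equiv.Perm (Fin n)) : ℕ :=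
  (Finset.univ.filter (fun p : Fin n × Fin n × Fin n =>
    p.1 < p.2.1 ∧ (p.2.1 : ℕ) + 1 = (p.2.2 : ℕ) ∧
      π p.2.1 < π p.1 ∧ π p.1 < π p.2.2)).card

/-- Number of occurrences of the vincular pattern \underline{21}-3. -/
def occ21_3 {n : ℕ} (π : Equiv.Perm (Fin n)) : ℕ :=
  (Finset.univ.filter (fun p : Fin n × Fin n × Fin n =>
    (p.1 : ℕ) + 1 = (p.2.1 : ℕ) ∧ p.2.1 < p.2.2 ∧
      π p.2.1 < π p.1 ∧ π p.1 < π p.2.2)).card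

/-- Number of occurrences of the vincular pattern \underline{23}-1. -/
def occ23_1 {n : ℕ} (π : Equiv.Perm (Fin n)) : ℕ :=
  (Finset.univ.filter (fun p : Fin n × Fin n × Fin n =>
    (p.1 : ℕ) + 1 = (p.2.1 : ℕ) ∧ p.2.1 < p.2.2 ∧
      π p.2.2 < π p.1 ∧ π p.1 < π p.2.1)).card

/-- Number of occurrences of the vincular pattern 3-\underline{12}. -/
def occ3_12 {n : ℕ} (π : Equiv.Perm (Fin n)) : ℕ :=
  (Finset.univ.filter (fun p : Fin n × Fin n × Fin n =>
    p.1 < p.2.1 ∧ (p.2.1 : ℕ) + 1 = (p.2.2 : ℕ) ∧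
      π p.2.1 < π p.2.2 ∧ π p.2.2 < π p.1)).card

/-- Number of occurrences of the vincular pattern \underline{31}-2. -/
def occ31_2 {n : ℕ} (π : Equiv.Perm (Fin n)) : ℕ :=
  (Finset.univ.filter (fun p : Fin n × Fin n × Fin n =>
    (p.1 : ℕ) + 1 = (p.2.1 : ℕ) ∧ p.2.1 < p.2.2 ∧
      π p.2.1 < π p.2.2 ∧ π p.2.2 < π p.1)).card

/-- Number of right-to-left maxima. -/
def rlmax {n : ℕ} (π : Equiv.Perm (Fin n)) : ℕ :=
  (Finset.univ.filter (fun i : Fin n => ∀ j, i < j → π j < π i)).card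

/-- Number of right-to-left minima. -/
def rlmin {n : ℕ} (π : Equiv.Perm (Fin n)) : ℕ :=
  (Finset.univ.filter (fun i : Fin n => ∀ j, i < j → π i < π j)).card

/-- Occurrences of the pattern 1-2 ending at the last position: indices i < n-1 with π_i < π_{n-1} (plus the anchor). -/
def stat12end {n : ℕ} (π : Equiv.Perm (Fin n)) : ℕ :=
  (Finset.univ.filter (fun p : Fin n × Fin n =>
    p.1 < p.2 ∧ (p.2 : ℕ) + 1 = n ∧ π p.1 < π p.2)).card

/-- Occurrences of the pattern 2-1 ending at the last position. -/
def stat21end {n : ℕ} (π : Equiv.Perm (Fin n)) : ℕ :=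
  (Finset.univ.filter (fun p : Fin n × Fin n =>
    p.1 < p.2 ∧ (p.2 : ℕ) + 1 = n ∧ π p.2 < π p.1)).card

/-!
Let `π` of size `m + 1` avoid 132 and `b = π(last)`. An entry before the last that is smaller
than `b` can only be followed by entries smaller than `b`, since otherwise the last entry completes
a 132. Counting
the entries below and above `b` then shows that the first `m - b` positions carry the values above
`b` and the next `b` positions the values below `b`; these two blocks are `α` and `β`, and as
patterns of `π` they avoid 132. Both blocks, and hence the decomposition, are determined by `π`.
Conversely, a 132 in `α ⊖ (β ⊕ 1)` cannot straddle two blocks: the entries of `α` exceed all later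
entries and the final entry exceeds all earlier ones.
-/

def IsBlock {m n : ℕ} (π : Perm (Fin n)) (σ : Perm (Fin m)) (p q : ℕ) : Prop :=
  p + m ≤ n ∧ ∀ (i : Fin m) (x : Fin n), x.val = p + i.val → (π x).val = q + (σ i).val

namespace IsBlock

variable {m n p q : ℕ} {π : Perm (Fin n)} {σ : Perm (Fin m)}

lemma val_apply (hb : IsBlock π σ p q) (x : Fin n) (hpx : p ≤ x.val) (hxm : x.val < p + m) :
    (π x).val = q + (σ ⟨x - p, by omega⟩).val :=
  hb.2 _ x (by simp only; omega)

lemma val_apply_lt (hb : IsBlock π σ p q) (x : Fin n) (hpx : p ≤ x.val) (hxm : x.val < p + m) :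
    (π x).val < q + m := by
  rw [hb.val_apply x hpx hxm]
  exact Nat.add_lt_add_left (Fin.isLt _) q

lemma apply_eq {τ : Perm (Fin n)} (hπ : IsBlock π σ p q) (hτ : IsBlock τ σ p q) (x : Fin n)
    (hpx : p ≤ x.val) (hxm : x.val < p + m) : π x = τ x :=
  Fin.ext <| (hπ.val_apply x hpx hxm).trans (hτ.val_apply x hpx hxm).symm

lemma trans {m' p' q' : ℕ} {ρ : Perm (Fin m')} (hπ : IsBlock π σ p q) (hσ : IsBlock σ ρ p' q') :
    IsBlock π ρ (p + p') (q + q') := by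
  refine ⟨by have := hπ.1; have := hσ.1; omega, fun i x hx => ?_⟩
  rw [hπ.2 ⟨p' + i, by have := hσ.1; omega⟩ x (by simp only; omega), hσ.2 i _ rfl, add_assoc]

lemma unique {σ' : Perm (Fin m)} (hb : IsBlock π σ p q) (hb' : IsBlock π σ' p q) : σ = σ' := by
  ext i
  have hx : p + i.val < n := by have := hb.1; omega
  have := hb.2 i ⟨p + i, hx⟩ rfl
  have := hb'.2 i ⟨p + i, hx⟩ rfl
  omega

lemma avoids132_of_avoids132 (hb : IsBlock π σ p q) (hπ : avoids132 π) : avoids132 σ := by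
  rintro ⟨i, j, k, hij, hjk, hik, hkj⟩
  have hpos (l : Fin m) : p + l.val < n := by have := hb.1; omega
  have hval (l : Fin m) := hb.2 l ⟨p + l, hpos l⟩ rfl
  refine hπ ⟨⟨p + i, hpos i⟩, ⟨p + j, hpos j⟩, ⟨p + k, hpos k⟩, ?_, ?_, ?_, ?_⟩ <;>
    simp only [Fin.lt_def, hval] at * <;> omega

/-- An occurrence of `132` inside a block is an occurrence in its pattern. -/
lemma not_lt_of_avoids132 (hb : IsBlock π σ p q) (hσ : avoids132 σ) {i j k : Fin n}
    (hpi : p ≤ i.val) (hij : i < j) (hjk : j < k) (hkm : k.val < p + m) (hik : π i < π k) :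
    ¬ π k < π j := by
  intro hkj
  rw [Fin.lt_def] at hij hjk hik hkj
  rw [hb.val_apply i hpi (by omega), hb.val_apply k (by omega) hkm] at hik
  rw [hb.val_apply k (by omega) hkm, hb.val_apply j (by omega) (by omega)] at hkj
  exact hσ ⟨⟨i - p, by omega⟩, ⟨j - p, by omega⟩, ⟨k - p, by omega⟩,
    by simp only [Fin.mk_lt_mk]; omega, by simp only [Fin.mk_lt_mk]; omega,
    Fin.lt_def.2 (by omega), Fin.lt_def.2 (by omega)⟩

end IsBlock

section BlocksOfSums

variable {a b : ℕ} (α : Perm (Fin a)) (β : Perm (Fin b))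

lemma isBlock_dsum_left : IsBlock (dsum α β) α 0 0 := by
  refine ⟨by omega, fun i x hx => ?_⟩
  obtain rfl : x = Fin.castAdd b i := Fin.ext (by simpa using hx)
  simp [dsum]

lemma isBlock_dsum_right : IsBlock (dsum α β) β a a := by
  refine ⟨le_rfl, fun i x hx => ?_⟩
  obtain rfl : x = Fin.natAdd a i := Fin.ext (by simpa using hx)
  simp [dsum]

lemma isBlock_ssum_left : IsBlock (ssum α β) α 0 b := by
  refine ⟨by omega, fun i x hx => ?_⟩
  obtain rfl : x = Fin.castAdd b i := Fin.ext (by simpa using hx)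
  simp [ssum, add_comm]

lemma isBlock_ssum_right : IsBlock (ssum α β) β a 0 := by
  refine ⟨le_rfl, fun i x hx => ?_⟩
  obtain rfl : x = Fin.natAdd a i := Fin.ext (by simpa using hx)
  simp [ssum]

end BlocksOfSums

lemma isBlock_castPerm {m n : ℕ} (h : m = n) (σ : Perm (Fin m)) : IsBlock (castPerm h σ) σ 0 0 := by
  subst h
  exact ⟨(zero_add m).le, fun i x hx => by simp [castPerm, Fin.ext_iff.2 (hx.trans (zero_add _))]⟩


section AvoidanceOfSums

variable {a b : ℕ} {α : Perm (Fin a)} {β : Perm (Fin b)}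

lemma avoids132_ssum (hα : avoids132 α) (hβ : avoids132 β) : avoids132 (ssum α β) := by
  rintro ⟨i, j, k, hij, hjk, hik, hkj⟩
  rcases lt_or_ge k.val a with hk | hk
  · exact (isBlock_ssum_left α β).not_lt_of_avoids132 hα (Nat.zero_le _) hij hjk (by omega) hik hkj
  rcases lt_or_ge i.val a with hi | hi
  · have := (isBlock_ssum_left α β).val_apply i (Nat.zero_le _) (by omega)
    have := (isBlock_ssum_right α β).val_apply_lt k hk (by omega)
    rw [Fin.lt_def] at hik
    omega
  · exact (isBlock_ssum_right α β).not_lt_of_avoids132 hβ hi hij hjk (by omega) hik hkj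

lemma avoids132_dsum_one (hα : avoids132 α) : avoids132 (dsum α (1 : Perm (Fin 1))) := by
  rintro ⟨i, j, k, hij, hjk, hik, hkj⟩
  rcases lt_or_ge k.val a with hk | hk
  · exact (isBlock_dsum_left α 1).not_lt_of_avoids132 hα (Nat.zero_le _) hij hjk (by omega) hik hkj
  · have := (isBlock_dsum_left α 1).val_apply_lt j (Nat.zero_le _) (by omega)
    have := (isBlock_dsum_right α 1).val_apply k hk (by omega)
    rw [Fin.lt_def] at hkj
    omega

end AvoidanceOfSums

lemma avoids132_castPerm {m n : ℕ} (h : m = n) {σ : Perm (Fin m)} (hσ : avoids132 σ) :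
    avoids132 (castPerm h σ) := by
  subst h
  exact hσ

noncomputable def blockPerm {n : ℕ} (π : Perm (Fin n)) (p q m : ℕ) (hpm : p + m ≤ n)
    (hq : ∀ i : Fin m, q ≤ (π ⟨p + i, by omega⟩).val ∧ (π ⟨p + i, by omega⟩).val < q + m) :
    Perm (Fin m) :=
  Equiv.ofBijective (fun i => ⟨(π ⟨p + i, by omega⟩).val - q, by have := hq i; omega⟩) <|
    Finite.injective_iff_bijective.mp fun i j hij => by
      have := hq i
      have := hq j
      have hπ : π ⟨p + i, by omega⟩ = π ⟨p + j, by omega⟩ :=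
        Fin.ext (by simp only [Fin.mk.injEq] at hij; omega)
      simpa [Fin.ext_iff] using π.injective hπ

lemma isBlock_blockPerm {n : ℕ} (π : Perm (Fin n)) (p q m : ℕ) (hpm : p + m ≤ n)
    (hq : ∀ i : Fin m, q ≤ (π ⟨p + i, by omega⟩).val ∧ (π ⟨p + i, by omega⟩).val < q + m) :
    IsBlock π (blockPerm π p q m hpm hq) p q := by
  refine ⟨hpm, fun i x hx => ?_⟩
  obtain rfl : x = ⟨p + i, Nat.lt_of_lt_of_le (Nat.add_lt_add_left i.isLt p) hpm⟩ := Fin.ext hx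
  have := hq i
  simp only [blockPerm, ofBijective_apply]
  omega

/-- The permutation `α ⊖ (β ⊕ 1)`. -/
def ssumDsumOne {a b n : ℕ} (h : a + (b + 1) = n) (α : Perm (Fin a)) (β : Perm (Fin b)) :
    Perm (Fin n) :=
  castPerm h (ssum α (dsum β 1))

section SsumDsumOne

variable {a b n : ℕ} (h : a + (b + 1) = n) (α : Perm (Fin a)) (β : Perm (Fin b))

lemma isBlock_ssumDsumOne_left : IsBlock (ssumDsumOne h α β) α 0 (b + 1) := by
  unfold ssumDsumOne
  simpa only [zero_add, add_zero] using
    (isBlock_castPerm h _).trans (isBlock_ssum_left α (dsum β 1))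

lemma isBlock_ssumDsumOne_right : IsBlock (ssumDsumOne h α β) β a 0 := by
  unfold ssumDsumOne
  simpa only [zero_add, add_zero] using
    ((isBlock_castPerm h _).trans (isBlock_ssum_right α _)).trans (isBlock_dsum_left β 1)

lemma isBlock_ssumDsumOne_last : IsBlock (ssumDsumOne h α β) (1 : Perm (Fin 1)) (a + b) b := by
  unfold ssumDsumOne
  simpa only [zero_add, add_zero] using
    ((isBlock_castPerm h _).trans (isBlock_ssum_right α _)).trans (isBlock_dsum_right β 1)

lemma eq_ssumDsumOne_of_isBlock {π : Perm (Fin n)} (hα : IsBlock π α 0 (b + 1))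
    (hβ : IsBlock π β a 0) (hlast : IsBlock π (1 : Perm (Fin 1)) (a + b) b) :
    π = ssumDsumOne h α β := by
  ext x : 1
  rcases lt_or_ge x.val a with hx | hx
  · exact hα.apply_eq (isBlock_ssumDsumOne_left h α β) x (Nat.zero_le _) (by omega)
  rcases lt_or_ge x.val (a + b) with hx' | hx'
  · exact hβ.apply_eq (isBlock_ssumDsumOne_right h α β) x hx hx'
  · exact hlast.apply_eq (isBlock_ssumDsumOne_last h α β) x hx' (by omega)

end SsumDsumOne

lemma avoids132_ssumDsumOne {a b n : ℕ} (h : a + (b + 1) = n) {α : Perm (Fin a)}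
    {β : Perm (Fin b)} (hα : avoids132 α) (hβ : avoids132 β) :
    avoids132 (ssumDsumOne h α β) :=
  avoids132_castPerm h (avoids132_ssum hα (avoids132_dsum_one hβ))

lemma ssumDsumOne_injective {a b a' b' n : ℕ} {h : a + (b + 1) = n} {h' : a' + (b' + 1) = n}
    {α : Perm (Fin a)} {β : Perm (Fin b)} {α' : Perm (Fin a')} {β' : Perm (Fin b')}
    (he : ssumDsumOne h α β = ssumDsumOne h' α' β') :
    (⟨a, b, α, β⟩ : Σ a b : ℕ, Perm (Fin a) × Perm (Fin b)) = ⟨a', b', α', β'⟩ := by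
  obtain rfl : b = b' := by
    have hlast := (isBlock_ssumDsumOne_last h α β).val_apply ⟨a + b, by omega⟩ le_rfl (by omega)
    have hlast' := (isBlock_ssumDsumOne_last h' α' β').val_apply ⟨a + b, by omega⟩
      (by simp only; omega) (by simp only; omega)
    rw [he] at hlast
    omega
  obtain rfl : a = a' := by omega
  have hα := isBlock_ssumDsumOne_left h α β
  have hβ := isBlock_ssumDsumOne_right h α β
  rw [he] at hα hβ
  rw [hα.unique (isBlock_ssumDsumOne_left h' α' β'),
    hβ.unique (isBlock_ssumDsumOne_right h' α' β')]

section LastEntry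

variable {m : ℕ} {π : Perm (Fin (m + 1))}

lemma avoids132.lt_last_of_lt (hπ : avoids132 π) {i j : Fin (m + 1)} (hij : i < j)
    (hj : j ≠ Fin.last m) (hi : π i < π (Fin.last m)) : π j < π (Fin.last m) := by
  by_contra! hle
  have hlt : π (Fin.last m) < π j := lt_of_le_of_ne hle (π.injective.ne hj.symm)
  exact hπ ⟨i, j, Fin.last m, hij, Fin.lt_last_iff_ne_last.2 hj, hi, hlt⟩

lemma avoids132.last_lt_of_lt (hπ : avoids132 π) {x : Fin (m + 1)}
    (hx : x.val < m - (π (Fin.last m)).val) : π (Fin.last m) < π x := by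
  by_contra! hle
  have hxl : x ≠ Fin.last m := Fin.ne_of_lt (Fin.lt_def.2 (by simp only [Fin.val_last]; omega))
  have hlt : π x < π (Fin.last m) := lt_of_le_of_ne hle (π.injective.ne hxl)
  have hmaps : Set.MapsTo π (Ico x (Fin.last m)) (Iio (π (Fin.last m))) := by
    intro y hy
    simp only [coe_Ico, coe_Iio, Set.mem_Ico, Set.mem_Iio] at hy ⊢
    rcases hy.1.eq_or_lt with rfl | hxy
    · exact hlt
    · exact hπ.lt_last_of_lt hxy hy.2.ne hlt
  have := card_le_card_of_injOn π hmaps π.injective.injOn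
  rw [Fin.card_Ico, Fin.card_Iio, Fin.val_last] at this
  omega

lemma avoids132.lt_last_of_le (hπ : avoids132 π) {x : Fin (m + 1)}
    (hx : m - (π (Fin.last m)).val ≤ x.val) (hxm : x.val < m) : π x < π (Fin.last m) := by
  by_contra! hle
  have hxl : x ≠ Fin.last m := Fin.ne_of_lt (Fin.lt_def.2 (by simpa using hxm))
  have hgt : π (Fin.last m) < π x := lt_of_le_of_ne hle (π.injective.ne hxl.symm)
  have hmaps : Set.MapsTo π (Iic x) (Ioi (π (Fin.last m))) := by
    intro y hy
    simp only [coe_Iic, coe_Ioi, Set.mem_Iic, Set.mem_Ioi] at hy ⊢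
    rcases hy.eq_or_lt with rfl | hyx
    · exact hgt
    · by_contra! hy'
      have hyl : y ≠ Fin.last m := (hyx.trans_le (Fin.le_last x)).ne
      exact (hπ.lt_last_of_lt hyx hxl (lt_of_le_of_ne hy' (π.injective.ne hyl))).not_gt hgt
  have := card_le_card_of_injOn π hmaps π.injective.injOn
  rw [Fin.card_Iic, Fin.card_Ioi] at this
  omega

end LastEntry

lemma exists_ssumDsumOne_of_avoids132 {m : ℕ} {π : Perm (Fin (m + 1))} (hπ : avoids132 π) :
    ∃ (a b : ℕ) (h : a + (b + 1) = m + 1) (α : Perm (Fin a)) (β : Perm (Fin b)),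
      avoids132 α ∧ avoids132 β ∧ π = ssumDsumOne h α β := by
  set b := (π (Fin.last m)).val with hb
  have hbm : b ≤ m := Nat.lt_succ_iff.mp (π _).isLt
  have hα := isBlock_blockPerm π 0 (b + 1) (m - b) (by omega) fun i => by
    have := hπ.last_lt_of_lt (x := ⟨0 + i, by omega⟩) (by simp only; omega)
    have := (π ⟨0 + i, by omega⟩).isLt
    rw [Fin.lt_def] at *
    omega
  have hβ := isBlock_blockPerm π (m - b) 0 b (by omega) fun i => by
    have := hπ.lt_last_of_le (x := ⟨m - b + i, by omega⟩) (by simp only; omega)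
      (by simp only; omega)
    rw [Fin.lt_def] at this
    omega
  have hlast : IsBlock π (1 : Perm (Fin 1)) (m - b + b) b := by
    refine ⟨by omega, fun i x hx => ?_⟩
    obtain rfl : x = Fin.last m := Fin.ext (by simp only [Fin.val_last]; omega)
    simp [Fin.val_eq_zero, hb]
  exact ⟨m - b, b, by omega, _, _, hα.avoids132_of_avoids132 hπ, hβ.avoids132_of_avoids132 hπ,
    eq_ssumDsumOne_of_isBlock _ _ _ hα hβ hlast⟩

theorem stmt1 {n : ℕ} (hn : 0 < n) (π : Equiv.Perm (Fin n)) :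
    avoids132 π ↔
      ∃! d : Σ a : ℕ, Σ b : ℕ, Equiv.Perm (Fin a) × Equiv.Perm (Fin b),
        avoids132 d.2.2.1 ∧ avoids132 d.2.2.2 ∧
        ∃ h : d.1 + (d.2.1 + 1) = n,
          π = castPerm h (ssum d.2.2.1 (dsum d.2.2.2 (1 : Equiv.Perm (Fin 1)))) := by
  constructor
  · intro hπ
    obtain ⟨m, rfl⟩ := Nat.exists_eq_add_one_of_ne_zero hn.ne'
    obtain ⟨a, b, h, α, β, hα, hβ, rfl⟩ := exists_ssumDsumOne_of_avoids132 hπ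
    refine ⟨⟨a, b, α, β⟩, ⟨hα, hβ, h, rfl⟩, ?_⟩
    rintro ⟨a', b', α', β'⟩ ⟨-, -, h', he⟩
    exact (ssumDsumOne_injective he).symm
  · rintro ⟨⟨a, b, α, β⟩, ⟨hα, hβ, h, rfl⟩, -⟩
    exact avoids132_ssumDsumOne h hα hβ
end

section
/- Let φ be the involution on S_n(132) defined by φ(empty) = empty and φ(α ⊖ (β ⊕ 1)) = φ(β) ⊖ (φ(α) ⊕ 1). For every π ∈ S_n(132), the number of right-to-left maxima of π equals the number of right-to-left minima of φ(π), and the number of right-to-left minima of π equals the number of right-to-left maxima of φ(π). -/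
open Equiv Finset

/-!
The last entry `b` of a 132-avoider `π` splits it as `α ⊖ (β ⊕ 1)`: no entry smaller than `b`
is followed by a larger one before the end (the three would form a 132), so the `n - 1 - b`
entries larger than `b` come first. The right-to-left maxima of `α ⊖ γ` are those of `α` and of
`γ`, its right-to-left minima only those of `γ`; dually for `β ⊕ γ`. Hence
`rlmax π = rlmax α + 1` and `rlmin π = rlmin β + 1`, while `φ π = φ β ⊖ (φ α ⊕ 1)` has
`rlmin = rlmin (φ α) + 1` and `rlmax = rlmax (φ β) + 1`, and strong induction finishes.
-/

namespace Fin

theorem card_filter_univ_add {a b : ℕ} (p : Fin (a + b) → Prop) [DecidablePred p] :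
    #{i | p i} = #{x | p (castAdd b x)} + #{y | p (natAdd a y)} := by
  simp only [Finset.card_filter, Fin.sum_univ_add]

theorem castAdd_lt_natAdd {a b : ℕ} (x : Fin a) (y : Fin b) : castAdd b x < natAdd a y := by
  simp only [Fin.lt_def, Fin.val_castAdd, Fin.val_natAdd]; omega

theorem castAdd_lt_castAdd_iff {a : ℕ} (b : ℕ) {x y : Fin a} :
    castAdd b x < castAdd b y ↔ x < y :=
  Iff.rfl

theorem forall_castAdd_lt_iff {a b : ℕ} (x : Fin a) (P : Fin (a + b) → Prop) :
    (∀ j, castAdd b x < j → P j) ↔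
      (∀ l, x < l → P (castAdd b l)) ∧ ∀ y, P (natAdd a y) := by
  rw [forall_fin_add]
  simp [castAdd_lt_natAdd, castAdd_lt_castAdd_iff]

theorem forall_natAdd_lt_iff {a b : ℕ} (y : Fin b) (P : Fin (a + b) → Prop) :
    (∀ j, natAdd a y < j → P j) ↔ ∀ l, y < l → P (natAdd a l) := by
  rw [forall_fin_add]
  simp [(castAdd_lt_natAdd _ _).not_gt]

end Fin

section CastPerm

variable {m n : ℕ}

@[simp] theorem castPerm_rfl (π : Perm (Fin m)) : castPerm rfl π = π :=
  rfl

theorem castPerm_castPerm_symm (h : m = n) (π : Perm (Fin n)) :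
    castPerm h (castPerm h.symm π) = π := by
  subst h; rfl

theorem rlmax_castPerm (h : m = n) (π : Perm (Fin m)) : rlmax (castPerm h π) = rlmax π := by
  subst h; rfl

theorem rlmin_castPerm (h : m = n) (π : Perm (Fin m)) : rlmin (castPerm h π) = rlmin π := by
  subst h; rfl

theorem avoids132_castPerm_iff (h : m = n) (π : Perm (Fin m)) :
    avoids132 (castPerm h π) ↔ avoids132 π := by
  subst h; rfl

end CastPerm

section Sums

variable {a b : ℕ} (α : Perm (Fin a)) (γ : Perm (Fin b))

@[simp] theorem ssum_castAdd (x : Fin a) : (ssum α γ (Fin.castAdd b x) : ℕ) = b + α x := by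
  simp [ssum, add_comm]

@[simp] theorem ssum_natAdd (y : Fin b) : (ssum α γ (Fin.natAdd a y) : ℕ) = γ y := by
  simp [ssum]

@[simp] theorem dsum_castAdd (x : Fin a) : (dsum α γ (Fin.castAdd b x) : ℕ) = α x := by
  simp [dsum]

@[simp] theorem dsum_natAdd (y : Fin b) : (dsum α γ (Fin.natAdd a y) : ℕ) = a + γ y := by
  simp [dsum]

theorem rlmax_ssum : rlmax (ssum α γ) = rlmax α + rlmax γ := by
  simp only [rlmax, Fin.card_filter_univ_add, Fin.forall_castAdd_lt_iff, Fin.forall_natAdd_lt_iff]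
  simp only [Fin.lt_def, ssum_castAdd, ssum_natAdd, add_lt_add_iff_left]
  congr 2
  ext x
  simp only [mem_filter, mem_univ, true_and]
  exact and_iff_left fun y => by have := (γ y).isLt; omega

theorem rlmin_ssum (hb : 0 < b) : rlmin (ssum α γ) = rlmin γ := by
  simp only [rlmin, Fin.card_filter_univ_add, Fin.forall_castAdd_lt_iff, Fin.forall_natAdd_lt_iff]
  simp only [Fin.lt_def, ssum_castAdd, ssum_natAdd, add_lt_add_iff_left]
  rw [add_eq_right, card_eq_zero, filter_eq_empty_iff]
  rintro x - ⟨-, hx⟩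
  have := hx ⟨0, hb⟩
  have := (γ ⟨0, hb⟩).isLt
  omega

theorem rlmax_dsum (hb : 0 < b) : rlmax (dsum α γ) = rlmax γ := by
  simp only [rlmax, Fin.card_filter_univ_add, Fin.forall_castAdd_lt_iff, Fin.forall_natAdd_lt_iff]
  simp only [Fin.lt_def, dsum_castAdd, dsum_natAdd, add_lt_add_iff_left]
  rw [add_eq_right, card_eq_zero, filter_eq_empty_iff]
  rintro x - ⟨-, hx⟩
  have := hx ⟨0, hb⟩
  have := (α x).isLt
  omega

theorem rlmin_dsum : rlmin (dsum α γ) = rlmin α + rlmin γ := by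
  simp only [rlmin, Fin.card_filter_univ_add, Fin.forall_castAdd_lt_iff, Fin.forall_natAdd_lt_iff]
  simp only [Fin.lt_def, dsum_castAdd, dsum_natAdd, add_lt_add_iff_left]
  congr 2
  ext x
  simp only [mem_filter, mem_univ, true_and]
  exact and_iff_left fun y => by have := (α x).isLt; omega

theorem rlmax_ssum_dsum_one (β : Perm (Fin b)) :
    rlmax (ssum α (dsum β (1 : Perm (Fin 1)))) = rlmax α + 1 := by
  rw [rlmax_ssum, rlmax_dsum _ _ Nat.one_pos]
  rfl

theorem rlmin_ssum_dsum_one (β : Perm (Fin b)) :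
    rlmin (ssum α (dsum β (1 : Perm (Fin 1)))) = rlmin β + 1 := by
  rw [rlmin_ssum _ _ b.succ_pos, rlmin_dsum]
  rfl

end Sums

section Avoidance

variable {a b : ℕ} {α : Perm (Fin a)} {γ : Perm (Fin b)}

theorem avoids132_of_strictMono {m n : ℕ} {σ : Perm (Fin m)} {π : Perm (Fin n)}
    (e : Fin m → Fin n) (he : StrictMono e) (hσ : ∀ i j, σ i < σ j → π (e i) < π (e j))
    (hπ : avoids132 π) : avoids132 σ := by
  rintro ⟨i, j, k, hij, hjk, hik, hkj⟩
  exact hπ ⟨e i, e j, e k, he hij, he hjk, hσ i k hik, hσ k j hkj⟩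

theorem avoids132_of_ssum_left (h : avoids132 (ssum α γ)) : avoids132 α :=
  avoids132_of_strictMono _ (Fin.strictMono_castAdd b)
    (fun i j hij => Fin.lt_def.2 <| by
      rw [ssum_castAdd, ssum_castAdd]; exact Nat.add_lt_add_left hij b) h

theorem avoids132_of_ssum_right (h : avoids132 (ssum α γ)) : avoids132 γ :=
  avoids132_of_strictMono _ (Fin.strictMono_natAdd a)
    (fun i j hij => Fin.lt_def.2 (by rw [ssum_natAdd, ssum_natAdd]; exact hij)) h

theorem avoids132_of_dsum_left (h : avoids132 (dsum α γ)) : avoids132 α :=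
  avoids132_of_strictMono _ (Fin.strictMono_castAdd b)
    (fun i j hij => Fin.lt_def.2 (by rw [dsum_castAdd, dsum_castAdd]; exact hij)) h

end Avoidance

theorem exists_perm_add_eq_of_injective {m c : ℕ} (f : Fin m → ℕ) (hf : Function.Injective f)
    (hc : ∀ x, c ≤ f x ∧ f x < c + m) : ∃ α : Perm (Fin m), ∀ x, c + α x = f x := by
  let g : Fin m → Fin m := fun x => ⟨f x - c, by have := hc x; omega⟩
  have hg : Function.Injective g := fun x y hxy => hf <| by
    have := hc x; have := hc y; have := congrArg Fin.val hxy; simp only [g] at this; omega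
  exact ⟨Equiv.ofBijective g hg.bijective_of_finite, fun x => by
    have := hc x; simp only [Equiv.ofBijective_apply, g]; omega⟩

theorem exists_dsum_eq {a b : ℕ} (σ : Perm (Fin (a + b)))
    (hσ : ∀ x : Fin a, (σ (Fin.castAdd b x) : ℕ) < a) :
    ∃ (α : Perm (Fin a)) (γ : Perm (Fin b)), dsum α γ = σ := by
  obtain ⟨α, hα⟩ := exists_perm_add_eq_of_injective (c := 0)
    (fun x => (σ (Fin.castAdd b x) : ℕ))
    (fun x y h => Fin.castAdd_injective _ _ (σ.injective (Fin.ext h)))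
    (fun x => ⟨Nat.zero_le _, by simpa using hσ x⟩)
  -- the left block already takes every value below `a`
  have hright : ∀ y : Fin b, a ≤ (σ (Fin.natAdd a y) : ℕ) := by
    intro y
    by_contra! hy
    obtain ⟨x, hx⟩ := α.surjective ⟨_, hy⟩
    have := hα x
    rw [hx] at this
    exact (Fin.castAdd_lt_natAdd x y).ne (σ.injective (Fin.ext (by simp only at this; omega)))
  obtain ⟨γ, hγ⟩ := exists_perm_add_eq_of_injective (c := a)
    (fun y => (σ (Fin.natAdd a y) : ℕ))
    (fun x y h => Fin.natAdd_injective _ _ (σ.injective (Fin.ext h)))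
    (fun y => ⟨hright y, (σ _).isLt⟩)
  refine ⟨α, γ, Equiv.ext fun i => Fin.ext ?_⟩
  induction i using Fin.addCases with
  | left x => simpa using hα x
  | right y => simpa using hγ y

theorem exists_ssum_eq {a b : ℕ} (σ : Perm (Fin (a + b)))
    (hσ : ∀ x : Fin a, b ≤ (σ (Fin.castAdd b x) : ℕ)) :
    ∃ (α : Perm (Fin a)) (γ : Perm (Fin b)), ssum α γ = σ := by
  obtain ⟨α, hα⟩ := exists_perm_add_eq_of_injective (c := b)
    (fun x => (σ (Fin.castAdd b x) : ℕ))
    (fun x y h => Fin.castAdd_injective _ _ (σ.injective (Fin.ext h)))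
    (fun x => ⟨hσ x, by have := (σ (Fin.castAdd b x)).isLt; omega⟩)
  -- the left block already takes every value from `b` on
  have hright : ∀ y : Fin b, (σ (Fin.natAdd a y) : ℕ) < b := by
    intro y
    by_contra! hy
    obtain ⟨x, hx⟩ := α.surjective
      ⟨σ (Fin.natAdd a y) - b, by have := (σ (Fin.natAdd a y)).isLt; omega⟩
    have := hα x
    rw [hx] at this
    exact (Fin.castAdd_lt_natAdd x y).ne (σ.injective (Fin.ext (by simp only at this; omega)))
  obtain ⟨γ, hγ⟩ := exists_perm_add_eq_of_injective (c := 0)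
    (fun y => (σ (Fin.natAdd a y) : ℕ))
    (fun x y h => Fin.natAdd_injective _ _ (σ.injective (Fin.ext h)))
    (fun y => ⟨Nat.zero_le _, by simpa using hright y⟩)
  refine ⟨α, γ, Equiv.ext fun i => Fin.ext ?_⟩
  induction i using Fin.addCases with
  | left x => simpa using hα x
  | right y => simpa using hγ y

theorem avoids132.lt_castAdd {a b : ℕ} {σ : Perm (Fin (a + (b + 1)))} (hσ : avoids132 σ)
    (hlast : (σ (Fin.natAdd a (Fin.last b)) : ℕ) = b) (x : Fin a) :
    b < (σ (Fin.castAdd (b + 1) x) : ℕ) := by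
  set L := Fin.natAdd a (Fin.last b)
  set i := Fin.castAdd (b + 1) x
  by_contra! hx
  have hiL : σ i < σ L := Fin.lt_def.2 <| lt_of_le_of_ne (by omega) <|
    Fin.val_injective.ne (σ.injective.ne (Fin.castAdd_lt_natAdd x (Fin.last b)).ne)
  have hbefore : ∀ j, b < (σ j : ℕ) → j < i := by
    intro j hj
    by_contra! hij
    have hjL : j < L := lt_of_le_of_ne
      (Fin.le_def.2 (by simp only [L, Fin.val_natAdd, Fin.val_last]; omega))
      (by rintro rfl; omega)
    exact hσ ⟨i, j, L, lt_of_le_of_ne hij (by rintro rfl; omega), hjL, hiL,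
      Fin.lt_def.2 (by omega)⟩
  -- the positions of the `a` values `b + 1, …, a + b` would fit into the `x < a` slots before `i`
  let p : Fin a ↪ Fin (a + (b + 1)) :=
    ⟨fun v => σ.symm ⟨b + 1 + v, by omega⟩,
      fun v w h => Fin.ext (by simpa using σ.symm.injective h)⟩
  have hcard := card_le_card (s := univ.map p) (t := Iio i) fun j hj => by
    obtain ⟨v, -, rfl⟩ := mem_map.1 hj
    refine mem_Iio.2 (hbefore _ ?_)
    change b < (σ (σ.symm _) : ℕ)
    rw [apply_symm_apply]
    exact Nat.lt_add_right _ b.lt_succ_self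
  simp only [card_map, card_univ, Fintype.card_fin, Fin.card_Iio, Fin.val_castAdd, i] at hcard
  omega

theorem avoids132.exists_eq_ssum_dsum_one {n : ℕ} {π : Perm (Fin n)} (hπ : avoids132 π)
    (hn : 0 < n) : ∃ (a b : ℕ) (α : Perm (Fin a)) (β : Perm (Fin b)) (h : a + (b + 1) = n),
      avoids132 α ∧ avoids132 β ∧ π = castPerm h (ssum α (dsum β 1)) := by
  obtain ⟨m, rfl⟩ := Nat.exists_eq_add_one_of_ne_zero hn.ne'
  set b := (π (Fin.last m) : ℕ)
  have h : m - b + (b + 1) = m + 1 := by have := (π (Fin.last m)).isLt; omega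
  set σ := castPerm h.symm π
  have hσ : avoids132 σ := (avoids132_castPerm_iff _ _).2 hπ
  have hσL : (σ (Fin.natAdd _ (Fin.last b)) : ℕ) = b := by
    have : Fin.cast h (Fin.natAdd (m - b) (Fin.last b)) = Fin.last m :=
      Fin.ext (by simp only [Fin.natAdd_last, Fin.val_cast, Fin.val_last]; omega)
    change (π (Fin.cast h _) : ℕ) = b
    rw [this]
  obtain ⟨α, γ, hαγ⟩ := exists_ssum_eq σ (hσ.lt_castAdd hσL)
  rw [← hαγ] at hσ hσL
  rw [ssum_natAdd] at hσL
  obtain ⟨β, δ, rfl⟩ := exists_dsum_eq γ fun y => by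
    have hne : (γ (Fin.castAdd 1 y) : ℕ) ≠ b := fun e =>
      (Fin.castAdd_lt_natAdd y (0 : Fin 1)).ne (γ.injective (Fin.ext (e.trans hσL.symm)))
    have := (γ (Fin.castAdd 1 y)).isLt
    omega
  rw [Subsingleton.elim δ 1] at hσ hαγ
  refine ⟨_, _, α, β, h, avoids132_of_ssum_left hσ,
    avoids132_of_dsum_left (avoids132_of_ssum_right hσ), ?_⟩
  rw [hαγ, castPerm_castPerm_symm]

theorem stmt5
    (φ : ∀ n : ℕ, Equiv.Perm (Fin n) → Equiv.Perm (Fin n))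
    (hrec : ∀ (a b : ℕ) (α : Equiv.Perm (Fin a)) (β : Equiv.Perm (Fin b)),
      avoids132 α → avoids132 β →
      φ (a + (b + 1)) (ssum α (dsum β (1 : Equiv.Perm (Fin 1)))) =
        castPerm (show b + (a + 1) = a + (b + 1) by omega)
          (ssum (φ b β) (dsum (φ a α) (1 : Equiv.Perm (Fin 1))))) :
    ∀ (n : ℕ) (π : Equiv.Perm (Fin n)), avoids132 π →
      rlmax π = rlmin (φ n π) ∧ rlmin π = rlmax (φ n π) := by
  intro n
  induction n using Nat.strong_induction_on with
  | _ n ih =>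
    intro π hπ
    rcases Nat.eq_zero_or_pos n with rfl | hn
    · simp [rlmax, rlmin]
    obtain ⟨a, b, α, β, rfl, hα, hβ, rfl⟩ := hπ.exists_eq_ssum_dsum_one hn
    rw [castPerm_rfl, hrec a b α β hα hβ, rlmin_castPerm, rlmax_castPerm, rlmax_ssum_dsum_one,
      rlmin_ssum_dsum_one, rlmin_ssum_dsum_one, rlmax_ssum_dsum_one, (ih a (by omega) α hα).1,
      (ih b (by omega) β hβ).2]
    exact ⟨rfl, rfl⟩
end

section
/- For any permutation π ∈ S_n (not necessarily pattern-avoiding), the number of occurrences of the vincular pattern 2-\underline{13} in π plus the number of indices i < n with π_i > π_n (occurrences of 2-1 ending at the last position) equals the number of occurrences of the vincular pattern 2-\underline{31} in π plus the number of descents of π. -/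
open Equiv Finset

/-
Write `L j = inversionsEndingAt π j` for the number of `i < j` with `π i > π j`. For adjacent
positions `j, j + 1`, counting the `i < j` according to where `π i` lies relative to `π j` and
`π (j + 1)` gives
`#(2-13 at j) + L (j + 1) = #(2-31 at j) + [π (j + 1) < π j] + L j`.
Summing over `j`, the `L` terms telescope to `L (n - 1) - L 0 = L (n - 1)`, which is the number
of `i < n - 1` with `π i > π (n - 1)`.
-/

def inversionsEndingAt {α : Type*} [LinearOrder α] {n : ℕ} (f : Fin n → α) (j : Fin n) : ℕ :=
  #{i | i < j ∧ f j < f i}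

lemma inversionsEndingAt_zero {α : Type*} [LinearOrder α] {N : ℕ} (f : Fin (N + 1) → α) :
    inversionsEndingAt f 0 = 0 := by
  simp [inversionsEndingAt]

lemma card_between_add_inversionsEndingAt_of_adjacent {α : Type*} [LinearOrder α] {n : ℕ}
    {f : Fin n → α} (hf : Function.Injective f) {j k : Fin n} (hjk : (j : ℕ) + 1 = k) :
    #{i | i < j ∧ f j < f i ∧ f i < f k} + inversionsEndingAt f k =
      #{i | i < j ∧ f k < f i ∧ f i < f j} + (if f k < f j then 1 else 0) +
        inversionsEndingAt f j := by
  have hlt_k : ∀ i, i < k ↔ i < j ∨ i = j := fun i => by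
    rw [Fin.lt_def, Fin.lt_def, Fin.ext_iff]; omega
  have hne_of_lt : ∀ i, i < j → f i ≠ f j ∧ f i ≠ f k := fun i hi =>
    ⟨hf.ne hi.ne, hf.ne (by rw [Ne, Fin.ext_iff]; have := Fin.lt_def.mp hi; omega)⟩
  have hdescent : (if f k < f j then 1 else 0) = #{i | i = j ∧ f k < f j} := by
    split_ifs with h <;> simp [h, filter_eq']
  rw [hdescent, inversionsEndingAt, inversionsEndingAt]
  simp only [card_filter, ← sum_add_distrib]
  refine sum_congr rfl fun i _ => ?_
  simp only [hlt_k]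
  rcases lt_trichotomy i j with hij | rfl | hji
  · have := hne_of_lt i hij
    split_ifs <;> grind
  · simp
  · simp [not_lt_of_gt hji, ne_of_gt hji]

lemma card_filter_prod_eq_sum {α β : Type*} [Fintype α] [Fintype β]
    (P : α → β → Prop) [∀ a b, Decidable (P a b)] :
    #{p : α × β | P p.1 p.2} = ∑ b, #{a | P a b} := by
  simp only [card_filter]
  rw [Fintype.sum_prod_type, sum_comm]

lemma sum_filter_adjacent {M : Type*} [AddCommMonoid M] {N : ℕ}
    (g : Fin (N + 1) × Fin (N + 1) → M) :
    ∑ q with (q.1 : ℕ) + 1 = q.2, g q = ∑ m : Fin N, g (m.castSucc, m.succ) := by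
  symm
  refine sum_nbij (fun m => (m.castSucc, m.succ)) (by simp) ?_ ?_ (fun _ _ => rfl)
  · intro a _ b _ h
    exact Fin.castSucc_injective _ (congrArg Prod.fst h)
  · rintro ⟨a, b⟩ hab
    simp only [coe_filter, mem_univ, true_and, Set.mem_ofPred_eq] at hab
    refine ⟨⟨a, by omega⟩, mem_coe.mpr (mem_univ _), ?_⟩
    ext <;> simp [hab]

lemma Fin.sum_succ_add_zero {M : Type*} [AddCommMonoid M] {N : ℕ} (g : Fin (N + 1) → M) :
    ∑ m : Fin N, g m.succ + g 0 = ∑ m : Fin N, g m.castSucc + g (Fin.last N) := by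
  rw [← Fin.sum_univ_castSucc, Fin.sum_univ_succ, add_comm]

lemma card_filter_lt_adjacent {N : ℕ} (Q : Fin (N + 1) → Fin (N + 1) → Fin (N + 1) → Prop)
    [∀ i j k, Decidable (Q i j k)] :
    #{p : Fin (N + 1) × Fin (N + 1) × Fin (N + 1) |
        p.1 < p.2.1 ∧ (p.2.1 : ℕ) + 1 = p.2.2 ∧ Q p.1 p.2.1 p.2.2} =
      ∑ m : Fin N, #{i | i < m.castSucc ∧ Q i m.castSucc m.succ} := by
  rw [card_filter_prod_eq_sum (fun (i : Fin (N + 1)) (q : Fin (N + 1) × Fin (N + 1)) =>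
      i < q.1 ∧ (q.1 : ℕ) + 1 = q.2 ∧ Q i q.1 q.2),
    ← sum_filter_adjacent (fun q => #{i | i < q.1 ∧ Q i q.1 q.2}), sum_filter]
  refine sum_congr rfl fun q _ => ?_
  split_ifs with h <;> simp [h]

lemma occ2_13_eq_sum {N : ℕ} (π : Perm (Fin (N + 1))) :
    occ2_13 π = ∑ m : Fin N, #{i | i < m.castSucc ∧ π m.castSucc < π i ∧ π i < π m.succ} :=
  card_filter_lt_adjacent fun i j k => π j < π i ∧ π i < π k

lemma occ2_31_eq_sum {N : ℕ} (π : Perm (Fin (N + 1))) :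
    occ2_31 π = ∑ m : Fin N, #{i | i < m.castSucc ∧ π m.succ < π i ∧ π i < π m.castSucc} :=
  card_filter_lt_adjacent fun i j k => π k < π i ∧ π i < π j

lemma des_eq_sum {N : ℕ} (π : Perm (Fin (N + 1))) :
    des π = ∑ m : Fin N, if π m.succ < π m.castSucc then 1 else 0 := by
  rw [des, ← filter_filter, card_filter]
  exact sum_filter_adjacent fun q => if π q.2 < π q.1 then 1 else 0

lemma stat21end_eq_inversionsEndingAt_last {N : ℕ} (π : Perm (Fin (N + 1))) :
    stat21end π = inversionsEndingAt π (Fin.last N) := by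
  rw [stat21end, card_filter_prod_eq_sum
      (fun (i j : Fin (N + 1)) => i < j ∧ (j : ℕ) + 1 = N + 1 ∧ π j < π i),
    Fintype.sum_eq_single (Fin.last N)]
  · simp [inversionsEndingAt]
  · intro j hj
    simp only [ne_eq, ← Fin.val_inj, Fin.val_last] at hj
    simp [hj]

theorem stmt9 (n : ℕ) (π : Equiv.Perm (Fin n)) :
    occ2_13 π + stat21end π = occ2_31 π + des π := by
  cases n with
  | zero => simp [occ2_13, occ2_31, des, stat21end]
  | succ N =>
    have local_identity := sum_congr (s₁ := univ) rfl fun (m : Fin N) _ =>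
      card_between_add_inversionsEndingAt_of_adjacent π.injective (j := m.castSucc) (k := m.succ) rfl
    have telescope := Fin.sum_succ_add_zero (inversionsEndingAt π)
    simp only [sum_add_distrib] at local_identity
    rw [occ2_13_eq_sum, occ2_31_eq_sum, des_eq_sum, stat21end_eq_inversionsEndingAt_last]
    rw [inversionsEndingAt_zero] at telescope
    omega
end

section
/- For any permutation π, the number of occurrences of the vincular pattern 2-\underline{13} in π ⊕ 1 equals the number of occurrences of 2-\underline{31} in π plus the number of descents of π. -/
open Equiv Finset

/-! Read π ⊕ 1 as a sequence s₀, …, sₙ, whose last entry sₙ = n is the maximum. Fix i < n and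
follow s_{i+1}, …, sₙ relative to the level sᵢ, which no later entry hits: an occurrence of
2-13 starting at i is an upward crossing of this level between adjacent positions, and an
occurrence of 2-31 a downward one (none ends at sₙ, so these are exactly the 2-31's of π).
Crossings alternate, so #up − #down = [sᵢ < sₙ] − [sᵢ < s_{i+1}] = [i is a descent of π].
Summing over i gives the identity. -/

theorem card_upcrossings_add_ite {α : Type*} [LinearOrder α] (s : ℕ → α) (c : α) {a b : ℕ}
    (hab : a ≤ b) (hs : ∀ j ∈ Icc a b, s j ≠ c) :
    #{j ∈ Ico a b | s j < c ∧ c < s (j + 1)} + (if c < s a then 1 else 0) =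
      #{j ∈ Ico a b | s (j + 1) < c ∧ c < s j} + (if c < s b then 1 else 0) := by
  induction b, hab using Nat.le_induction with
  | base => simp
  | succ b hab ih =>
    have ih := ih fun j hj => hs j (Icc_subset_Icc_right (Nat.le_succ b) hj)
    have hb := hs b (by simp [hab])
    have hb1 := hs (b + 1) (by simp; omega)
    simp only [card_filter] at ih ⊢
    rw [sum_Ico_succ_top hab, sum_Ico_succ_top hab]
    rcases hb.lt_or_gt with hb | hb <;> rcases hb1.lt_or_gt with hb1 | hb1 <;>
      simp [hb, hb1, hb.not_gt, hb1.not_gt] at ih ⊢ <;> omega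

theorem filter_Ico_pred_eq {p : ℕ → Prop} [DecidablePred p] (a b : ℕ)
    (hp : ∀ j, j + 1 = b → ¬ p j) : {j ∈ Ico a (b - 1) | p j} = {j ∈ Ico a b | p j} := by
  ext j
  simp only [mem_filter, mem_Ico]
  constructor
  · rintro ⟨⟨hj, hjb⟩, h⟩
    exact ⟨⟨hj, by omega⟩, h⟩
  · rintro ⟨⟨hj, hjb⟩, h⟩
    have : j + 1 ≠ b := fun hb => hp j hb h
    exact ⟨⟨hj, by omega⟩, h⟩

section Patterns

variable {α : Type*} {m : ℕ} (f : Fin m → α) (g : ℕ → α)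

theorem card_vincular_triples_eq_sum (hg : ∀ k : Fin m, g k = f k)
    (R : α → α → α → Prop) [∀ a b c, Decidable (R a b c)] :
    #{p : Fin m × Fin m × Fin m | p.1 < p.2.1 ∧ (p.2.1 : ℕ) + 1 = p.2.2 ∧
        R (f p.1) (f p.2.1) (f p.2.2)} =
      ∑ i ∈ range m, #{j ∈ Ico (i + 1) (m - 1) | R (g i) (g j) (g (j + 1))} := by
  rw [← card_sigma]
  refine card_bij (fun p _ => ⟨p.1, p.2.1⟩) ?_ ?_ ?_
  · rintro ⟨i, j, k⟩ hp
    simp only [mem_filter, mem_univ, true_and] at hp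
    obtain ⟨hij, hjk, hR⟩ := hp
    simp only [mem_sigma, mem_range, mem_filter, mem_Ico, hg, hjk]
    exact ⟨i.isLt, ⟨hij, by omega⟩, hR⟩
  · rintro ⟨i, j, k⟩ hp ⟨i', j', k'⟩ hp' h
    simp only [mem_filter, mem_univ, true_and] at hp hp'
    simp only [Sigma.mk.injEq, heq_eq_eq] at h
    have hk : (k : ℕ) = k' := by rw [← hp.2.1, ← hp'.2.1, h.2]
    exact Prod.ext (Fin.ext h.1) (Prod.ext (Fin.ext h.2) (Fin.ext hk))
  · rintro ⟨i, j⟩ hq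
    simp only [mem_sigma, mem_range, mem_filter, mem_Ico] at hq
    obtain ⟨hi, ⟨hij, hjm⟩, hR⟩ := hq
    refine ⟨(⟨i, hi⟩, ⟨j, by omega⟩, ⟨j + 1, by omega⟩), ?_, rfl⟩
    simp only [mem_filter, mem_univ, true_and, Fin.mk_lt_mk, ← hg]
    exact ⟨hij, hR⟩

theorem card_adjacent_pairs_eq (hg : ∀ k : Fin m, g k = f k)
    (R : α → α → Prop) [DecidableRel R] :
    #{p : Fin m × Fin m | (p.1 : ℕ) + 1 = p.2 ∧ R (f p.1) (f p.2)} =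
      #{i ∈ range (m - 1) | R (g i) (g (i + 1))} := by
  refine card_bij (fun p _ => p.1) ?_ ?_ ?_
  · rintro ⟨i, j⟩ hp
    simp only [mem_filter, mem_univ, true_and] at hp
    obtain ⟨hij, hR⟩ := hp
    simp only [mem_range, mem_filter, hg, hij]
    exact ⟨by omega, hR⟩
  · rintro ⟨i, j⟩ hp ⟨i', j'⟩ hp' (h : (i : ℕ) = i')
    simp only [mem_filter, mem_univ, true_and] at hp hp'
    exact Prod.ext (Fin.ext h) (Fin.ext (by rw [← hp.1, ← hp'.1, h]))
  · intro i hq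
    simp only [mem_range, mem_filter] at hq
    refine ⟨(⟨i, by omega⟩, ⟨i + 1, by omega⟩), ?_, rfl⟩
    simp only [mem_filter, mem_univ, true_and, ← hg]
    exact hq.2

end Patterns

theorem dsum_one_castSucc {n : ℕ} (π : Perm (Fin n)) (k : Fin n) :
    dsum π (1 : Perm (Fin 1)) k.castSucc = (π k).castSucc := by
  simp only [dsum, trans_apply, finSumFinEquiv_symm_apply_castSucc, sumCongr_apply, Perm.coe_one,
    Sum.map_inl, finSumFinEquiv_apply_left]
  rfl

theorem dsum_one_last {n : ℕ} (π : Perm (Fin n)) :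
    dsum π (1 : Perm (Fin 1)) (Fin.last n) = Fin.last n := by
  simp only [dsum, trans_apply, finSumFinEquiv_symm_last, sumCongr_apply, Perm.coe_one,
    Sum.map_inr, id_eq, finSumFinEquiv_apply_right]
  rfl

-- Indices are read modulo `n + 1`; only `k ≤ n` is ever used.
def permSeq {n : ℕ} (τ : Perm (Fin (n + 1))) (k : ℕ) : ℕ := τ (Fin.ofNat (n + 1) k)

section PermSeq

variable {n : ℕ} (τ : Perm (Fin (n + 1)))

theorem permSeq_val (k : Fin (n + 1)) : permSeq τ k = τ k := by
  simp [permSeq]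

theorem permSeq_injOn {i j : ℕ} (hi : i ≤ n) (hj : j ≤ n) (h : permSeq τ i = permSeq τ j) :
    i = j := by
  have := congrArg Fin.val (τ.injective (Fin.ext h))
  rwa [Fin.val_ofNat, Fin.val_ofNat, Nat.mod_eq_of_lt (by omega), Nat.mod_eq_of_lt (by omega)]
    at this

variable {τ} (hτ : τ (Fin.last n) = Fin.last n)
include hτ

theorem permSeq_self : permSeq τ n = n := by
  rw [permSeq, show Fin.ofNat (n + 1) n = Fin.last n from Fin.ext (by simp), hτ, Fin.val_last]

theorem permSeq_lt {i : ℕ} (hi : i < n) : permSeq τ i < permSeq τ n := by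
  refine lt_of_le_of_ne ?_ fun h => hi.ne (permSeq_injOn τ hi.le le_rfl h)
  rw [permSeq_self hτ]
  exact Nat.lt_succ_iff.mp (τ _).isLt

theorem card_upcrossings_permSeq {i : ℕ} (hi : i < n) :
    #{j ∈ Ico (i + 1) n | permSeq τ j < permSeq τ i ∧ permSeq τ i < permSeq τ (j + 1)} =
      #{j ∈ Ico (i + 1) (n - 1) | permSeq τ (j + 1) < permSeq τ i ∧ permSeq τ i < permSeq τ j} +
        if permSeq τ (i + 1) < permSeq τ i then 1 else 0 := by
  have hcross := card_upcrossings_add_ite (permSeq τ) (permSeq τ i) (by omega : i + 1 ≤ n)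
    fun j hj h => by
      rw [mem_Icc] at hj
      have := permSeq_injOn τ (by omega) hi.le h
      omega
  rw [if_pos (permSeq_lt hτ hi)] at hcross
  have hnext : permSeq τ (i + 1) ≠ permSeq τ i := fun h => by
    have := permSeq_injOn τ hi hi.le h; omega
  rw [filter_Ico_pred_eq _ _ fun j hj h => by
    rw [hj] at h; exact (permSeq_lt hτ hi).not_gt h.1]
  rcases hnext.lt_or_gt with h | h <;> simp [h, h.not_gt] at hcross ⊢ <;> omega

theorem card_descents_permSeq :
    #{i ∈ range (n - 1) | permSeq τ (i + 1) < permSeq τ i} =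
      #{i ∈ range n | permSeq τ (i + 1) < permSeq τ i} := by
  rw [range_eq_Ico, range_eq_Ico, filter_Ico_pred_eq _ _ fun j hj h => by
    rw [hj] at h; exact (permSeq_lt hτ (by omega)).not_gt h]

end PermSeq

theorem stmt10 (n : ℕ) (π : Equiv.Perm (Fin n)) :
    occ2_13 (dsum π (1 : Equiv.Perm (Fin 1))) = occ2_31 π + des π := by
  set σ := dsum π (1 : Perm (Fin 1))
  have hπ : ∀ k : Fin n, permSeq σ k = π k := fun k => by
    rw [← Fin.val_castSucc, permSeq_val, dsum_one_castSucc, Fin.val_castSucc]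
  have hlast : σ (Fin.last n) = Fin.last n := dsum_one_last π
  -- `<` on `Fin` unfolds to `<` on values, so each count is an instance of the general lemmas.
  have h13 : occ2_13 σ = _ := card_vincular_triples_eq_sum (fun k => (σ k : ℕ)) (permSeq σ)
    (permSeq_val σ) fun a b c => b < a ∧ a < c
  have h31 : occ2_31 π = _ := card_vincular_triples_eq_sum (fun k => (π k : ℕ)) (permSeq σ) hπ
    fun a b c => c < a ∧ a < b
  have hdes : des π = _ := card_adjacent_pairs_eq (fun k => (π k : ℕ)) (permSeq σ) hπ
    fun a b => b < a
  rw [h13, h31, hdes, card_descents_permSeq hlast, card_filter, sum_range_succ,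
    add_tsub_cancel_right, Ico_eq_empty_of_le n.le_succ, filter_empty, card_empty, add_zero,
    ← sum_add_distrib]
  exact sum_congr rfl fun i hi => card_upcrossings_permSeq hlast (mem_range.mp hi)
end

section
/- For any π ∈ S_n(132), the inverse permutation π^{-1} also avoids 132, and des(π^{-1}) = des(π); moreover the number of occurrences of the vincular pattern \underline{23}-1 in π^{-1} equals the number of occurrences of 3-\underline{12} in π, and the number of occurrences of 3-\underline{12} in π^{-1} equals the number of occurrences of \underline{23}-1 in π. -/
open Equiv Finset

/-!
Inversion maps occurrences of 132 to occurrences of 132, so `π⁻¹` avoids 132. The key fact is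
that in a 132-avoider an ascent `π (j - 1) < π j` forces the value `π j - 1` to lie to the left
of `j`, and to the right of every larger entry that precedes `j`. Hence the ascent `(j - 1, j)`
of `π` corresponds to the ascent `(π j - 1, π j)` of `π⁻¹`, which matches ascents of `π` with
ascents of `π⁻¹` (so the descents agree) and occurrences of 3-12 in `π` with occurrences of
23-1 in `π⁻¹`.
-/

theorem Fin.val_add_one_eq_iff_covBy {n : ℕ} {a b : Fin n} : (a : ℕ) + 1 = b ↔ a ⋖ b := by
  rw [Fin.covBy_iff, Nat.covBy_iff_add_one_eq]

instance Fin.decidableRelCovBy {n : ℕ} : DecidableRel (α := Fin n) (· ⋖ ·) :=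
  fun _ _ => decidable_of_iff _ Fin.val_add_one_eq_iff_covBy

section Ascents

variable {n : ℕ}

def ascents (σ : Perm (Fin n)) : Finset (Fin n × Fin n) :=
  univ.filter fun p => p.1 ⋖ p.2 ∧ σ p.1 < σ p.2

theorem des_add_card_ascents (σ : Perm (Fin n)) :
    des σ + #(ascents σ) = #(univ.filter fun p : Fin n × Fin n => p.1 ⋖ p.2) := by
  rw [← card_filter_add_card_filter_not (s := univ.filter fun p : Fin n × Fin n => p.1 ⋖ p.2)
    (p := fun p => σ p.2 < σ p.1), filter_filter, filter_filter]
  congr 1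
  · rw [des]
    congr 1
    ext p
    simp only [mem_filter, mem_univ, true_and, Fin.val_add_one_eq_iff_covBy]
  · rw [ascents]
    congr 1
    ext ⟨i, j⟩
    simp only [mem_filter, mem_univ, true_and, not_lt, and_congr_right_iff]
    exact fun hij => (σ.injective.ne hij.ne).le_iff_lt.symm

theorem leftInvOn_ascents (σ : Perm (Fin n)) :
    Set.LeftInvOn (fun p : Fin n × Fin n => (Order.pred (σ⁻¹ p.2), σ⁻¹ p.2))
      (fun p : Fin n × Fin n => (Order.pred (σ p.2), σ p.2)) (ascents σ) := by
  rintro ⟨i, j⟩ hp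
  simp only [ascents, coe_filter, mem_univ, true_and, Set.mem_ofPred_eq] at hp
  simp [hp.1.pred_eq]

end Ascents

namespace avoids132

variable {n : ℕ} {π : Perm (Fin n)}

theorem inv (h : avoids132 π) : avoids132 π⁻¹ := by
  rintro ⟨i, j, k, hij, hjk, hik, hkj⟩
  exact h ⟨π⁻¹ i, π⁻¹ k, π⁻¹ j, hik, hkj, by simpa using hij, by simpa using hjk⟩

theorem inv_lt_of_covBy (h : avoids132 π) {i j u : Fin n} (hij : i ⋖ j) (hπ : π i < π j)
    (hu : u ⋖ π j) : π⁻¹ u < j := by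
  set a := π⁻¹ u
  have ha : π a = u := by simp [a]
  by_contra! hja
  have hja : j < a := hja.lt_of_ne (by rintro rfl; exact hu.ne ha.symm)
  have hia : π i < π a := by
    rw [ha]
    exact (hu.le_of_lt hπ).lt_of_ne fun hiu =>
      (hij.lt.trans hja).ne (π.injective (hiu.trans ha.symm))
  exact h ⟨i, j, a, hij.lt, hja, hia, ha ▸ hu.lt⟩

theorem lt_inv_of_covBy (h : avoids132 π) {x j u : Fin n} (hxj : x < j) (hπ : π j < π x)
    (hu : u ⋖ π j) : x < π⁻¹ u := by
  set a := π⁻¹ u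
  have ha : π a = u := by simp [a]
  by_contra! hax
  have hax : a < x := hax.lt_of_ne (by rintro rfl; exact (ha ▸ hu.lt.trans hπ).false)
  exact h ⟨a, x, j, hax, hxj, ha ▸ hu.lt, hπ⟩

theorem mapsTo_ascents (h : avoids132 π) :
    Set.MapsTo (fun p : Fin n × Fin n => (Order.pred (π p.2), π p.2))
      (ascents π) (ascents π⁻¹) := by
  rintro ⟨i, j⟩ hp
  simp only [ascents, coe_filter, mem_univ, true_and, Set.mem_ofPred_eq] at hp ⊢
  have hu := Order.pred_covBy_of_not_isMin (not_isMin_of_lt hp.2)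
  exact ⟨hu, by simpa using h.inv_lt_of_covBy hp.1 hp.2 hu⟩

theorem card_ascents_inv (h : avoids132 π) : #(ascents π⁻¹) = #(ascents π) :=
  (card_nbij' _ _ h.mapsTo_ascents (by simpa only [inv_inv] using h.inv.mapsTo_ascents)
    (leftInvOn_ascents π) (by simpa only [inv_inv] using leftInvOn_ascents π⁻¹)).symm

theorem des_inv (h : avoids132 π) : des π⁻¹ = des π := by
  have := des_add_card_ascents π
  rw [← des_add_card_ascents π⁻¹, h.card_ascents_inv] at this
  omega

theorem occ23_1_inv (h : avoids132 π) : occ23_1 π⁻¹ = occ3_12 π := by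
  symm
  refine card_nbij' (fun p => (Order.pred (π p.2.2), π p.2.2, π p.1))
    (fun q => (π⁻¹ q.2.2, Order.pred (π⁻¹ q.2.1), π⁻¹ q.2.1)) ?_ ?_ ?_ ?_
  · rintro ⟨x, y, z⟩ hp
    simp only [coe_filter, mem_univ, true_and, Set.mem_ofPred_eq,
      Fin.val_add_one_eq_iff_covBy] at hp ⊢
    obtain ⟨hxy, hyz, hπyz, hπzx⟩ := hp
    have hu := Order.pred_covBy_of_not_isMin (not_isMin_of_lt hπyz)
    refine ⟨hu, hπzx, ?_, ?_⟩
    · simpa using h.lt_inv_of_covBy (hxy.trans hyz.lt) hπzx hu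
    · simpa using h.inv_lt_of_covBy hyz hπyz hu
  · rintro ⟨q, v, r⟩ hq
    simp only [coe_filter, mem_univ, true_and, Set.mem_ofPred_eq,
      Fin.val_add_one_eq_iff_covBy] at hq ⊢
    obtain ⟨hqv, hvr, hπrq, hπqv⟩ := hq
    have hy := Order.pred_covBy_of_not_isMin (not_isMin_of_lt hπqv)
    refine ⟨hπrq.trans_le (Order.le_pred_of_lt hπqv), hy, ?_, by simpa using hvr⟩
    simpa using h.inv.inv_lt_of_covBy hqv hπqv hy
  · rintro ⟨x, y, z⟩ hp
    simp only [coe_filter, mem_univ, true_and, Set.mem_ofPred_eq,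
      Fin.val_add_one_eq_iff_covBy] at hp
    simp [hp.2.1.pred_eq]
  · rintro ⟨q, v, r⟩ hq
    simp only [coe_filter, mem_univ, true_and, Set.mem_ofPred_eq,
      Fin.val_add_one_eq_iff_covBy] at hq
    simp [hq.1.pred_eq]

end avoids132

theorem stmt14 (n : ℕ) (π : Equiv.Perm (Fin n)) (h : avoids132 π) :
    avoids132 π⁻¹ ∧ des π⁻¹ = des π ∧
      occ23_1 π⁻¹ = occ3_12 π ∧ occ3_12 π⁻¹ = occ23_1 π := by
  refine ⟨h.inv, h.des_inv, h.occ23_1_inv, ?_⟩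
  simpa only [inv_inv] using h.inv.occ23_1_inv.symm
end
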